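/- arXiv:1203.0154 — 6 statements merged into one kernel-verified Lean document; each statement's English description precedes it below -/
import Mathlib

section
/- For any signed permutation π of [n], fwex(π) + fexc(π^tr) = 2n, where π^tr is the signed permutation whose signed permutation matrix is the transpose of that of π. -/
open Finset

/-- A signed permutation of `[n]`, encoded as an (unsigned) permutation of `Fin n`
together with a sign (`true` = negative) for each position. -/
abbrev BPerm (n : ℕ) := Equiv.Perm (Fin n) × (Fin n → Bool)

namespace BPerm

variable {n : ℕ}

/-- The value `π_k` (1-indexed, a signed integer), with `π_0 = 0` and `π_k = 0` for `k > n`. -/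
def vseq (π : BPerm n) (k : ℕ) : ℤ :=
  if h : 0 < k ∧ k ≤ n then
    (if π.2 ⟨k - 1, by omega⟩ then -1 else 1) * ((π.1 ⟨k - 1, by omega⟩ : ℕ) + 1 : ℤ)
  else 0

/-- Number of negative entries. -/
def neg (π : BPerm n) : ℕ := ((Finset.Icc 1 n).filter fun i => vseq π i < 0).card

/-- Number of weak excedances: `π_i ≥ i`. -/
def wex (π : BPerm n) : ℕ := ((Finset.Icc 1 n).filter fun i : ℕ => (i : ℤ) ≤ vseq π i).card

/-- Number of excedances: `π_i > i`. -/
def exc (π : BPerm n) : ℕ := ((Finset.Icc 1 n).filter fun i : ℕ => (i : ℤ) < vseq π i).card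

/-- Flag weak excedances: `2 wex + neg`. -/
def fwex (π : BPerm n) : ℕ := 2 * wex π + neg π

/-- Flag excedances: `2 exc + neg`. -/
def fexc (π : BPerm n) : ℕ := 2 * exc π + neg π

/-- Number of descents `π_i > π_{i+1}` for `i ∈ [n-1]`. -/
def des (π : BPerm n) : ℕ := ((Finset.Ico 1 n).filter fun i => vseq π (i + 1) < vseq π i).card

/-- Type `B` descents: also counts `i = 0`, with the convention `π_0 = 0`. -/
def desB (π : BPerm n) : ℕ := ((Finset.Ico 0 n).filter fun i => vseq π (i + 1) < vseq π i).card

/-- Flag descents. -/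
def fdes (π : BPerm n) : ℕ := des π + desB π

/-- Number of crossings: pairs `(i,j)` with `i,j > 0` such that `i < j ≤ π_i < π_j`, or
`-i < j ≤ -π_i < π_j`, or `i > j > π_i > π_j`. -/
def cro (π : BPerm n) : ℕ :=
  (((Finset.Icc 1 n) ×ˢ (Finset.Icc 1 n)).filter fun p : ℕ × ℕ =>
    ((p.1 < p.2 ∧ (p.2 : ℤ) ≤ vseq π p.1 ∧ vseq π p.1 < vseq π p.2) ∨
     (-(p.1 : ℤ) < (p.2 : ℤ) ∧ (p.2 : ℤ) ≤ -(vseq π p.1) ∧ -(vseq π p.1) < vseq π p.2) ∨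
     (p.2 < p.1 ∧ vseq π p.1 < (p.2 : ℤ) ∧ vseq π p.2 < vseq π p.1))).card

end BPerm

namespace BPerm

/-- The transpose `π^tr` of a signed permutation: `π^tr_i = ε·j` iff `π_j = ε·i`. -/
def transB (π : BPerm n) : BPerm n := (π.1⁻¹, fun i => π.2 (π.1⁻¹ i))

theorem card_filter_Icc_one_eq_sum_fin (n : ℕ) (P : ℕ → Prop) [DecidablePred P] :
    #{i ∈ Icc 1 n | P i} = ∑ i : Fin n, if P (i + 1) then 1 else 0 := by
  rw [card_filter, ← Ico_add_one_right_eq_Icc, sum_Ico_eq_sum_range, Nat.add_sub_cancel,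
    Fin.sum_univ_eq_sum_range (fun i => if P (i + 1) then 1 else 0)]
  simp only [add_comm 1]

theorem vseq_val_add_one (π : BPerm n) (i : Fin n) :
    vseq π (i + 1) = (if π.2 i then -1 else 1) * ((π.1 i : ℕ) + 1 : ℤ) := by
  simp [vseq, i.isLt]

def fwexAt (π : BPerm n) (i : ℕ) : ℕ :=
  2 * (if (i : ℤ) ≤ vseq π i then 1 else 0) + if vseq π i < 0 then 1 else 0

def fexcAt (π : BPerm n) (i : ℕ) : ℕ :=
  2 * (if (i : ℤ) < vseq π i then 1 else 0) + if vseq π i < 0 then 1 else 0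

theorem fwex_eq_sum_fwexAt (π : BPerm n) : fwex π = ∑ i : Fin n, fwexAt π (i + 1) := by
  simp only [fwex, wex, neg, fwexAt, card_filter_Icc_one_eq_sum_fin, mul_sum, sum_add_distrib]

theorem fexc_eq_sum_fexcAt (π : BPerm n) : fexc π = ∑ i : Fin n, fexcAt π (i + 1) := by
  simp only [fexc, exc, neg, fexcAt, card_filter_Icc_one_eq_sum_fin, mul_sum, sum_add_distrib]

/-- If `π_i = ε j` then `π^tr_j = ε i`: for `ε = -1` both positions contribute `1`, and for
`ε = 1` exactly one of `j ≥ i` and `i > j` holds. -/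
theorem fwexAt_add_fexcAt_transB (π : BPerm n) (i : Fin n) :
    fwexAt π (i + 1) + fexcAt (transB π) (π.1 i + 1) = 2 := by
  have hperm : (transB π).1 (π.1 i) = i := π.1.symm_apply_apply i
  have hsign : (transB π).2 (π.1 i) = π.2 i := congrArg π.2 hperm
  simp only [fwexAt, fexcAt, vseq_val_add_one, hperm, hsign]
  cases π.2 i <;> simp only [Bool.false_eq_true, if_true, if_false] <;>
    split_ifs <;> push_cast at * <;> omega

/-- For any signed permutation `π` of `[n]`, `fwex(π) + fexc(π^tr) = 2n`. -/
theorem fwex_add_fexc_transB (n : ℕ) (π : BPerm n) :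
    fwex π + fexc (transB π) = 2 * n := by
  rw [fwex_eq_sum_fwexAt, fexc_eq_sum_fexcAt,
    ← Equiv.sum_comp π.1 (fun j => fexcAt (transB π) (j + 1)), ← sum_add_distrib]
  simp only [fwexAt_add_fexcAt_transB, sum_const, card_univ, Fintype.card_fin, smul_eq_mul,
    mul_comm]

end BPerm
end

section
/- If a permutation σ of [n] has k weak excedances, then cro(σ) + al(σ) = (k-1)(n-k), where cro(σ) and al(σ) are the numbers of crossings and alignments of σ. -/
open Finset

namespace TypeA

variable {n : ℕ}

/-- Number of weak excedances of a permutation of `[n]`. -/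
def wexA (σ : Equiv.Perm (Fin n)) : ℕ :=
  (Finset.univ.filter fun i : Fin n => (i : ℕ) ≤ (σ i : ℕ)).card

/-- Number of crossings: pairs `(i,j)` with `i < j ≤ σ(i) < σ(j)` or `i > j > σ(i) > σ(j)`. -/
def croA (σ : Equiv.Perm (Fin n)) : ℕ :=
  ((Finset.univ ×ˢ Finset.univ).filter fun p : Fin n × Fin n =>
    ((p.1 : ℕ) < p.2 ∧ (p.2 : ℕ) ≤ σ p.1 ∧ (σ p.1 : ℕ) < σ p.2) ∨
    ((p.2 : ℕ) < p.1 ∧ (σ p.1 : ℕ) < p.2 ∧ (σ p.2 : ℕ) < σ p.1)).card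

/-- In the pignose diagram, the arc of `i` goes from position `2i-1` (first vertex of the
`i`-th pignose) to position `2σ(i)` (second vertex of the `σ(i)`-th pignose); it is an upper
arc if `σ(i) ≥ i` and a lower arc otherwise.  `arcL` is its left endpoint
(positions are `1,…,2n`, and `i` is 1-indexed as `i.val + 1`). -/
def arcL (σ : Equiv.Perm (Fin n)) (i : Fin n) : ℕ :=
  if (i : ℕ) ≤ (σ i : ℕ) then 2 * (i : ℕ) + 1 else 2 * (σ i : ℕ) + 2

/-- Right endpoint of the arc of `i` in the pignose diagram. -/
def arcR (σ : Equiv.Perm (Fin n)) (i : Fin n) : ℕ :=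
  if (i : ℕ) ≤ (σ i : ℕ) then 2 * (σ i : ℕ) + 2 else 2 * (i : ℕ) + 1

/-- Number of alignments: unordered pairs of arcs of the pignose diagram forming one of the
four alignment configurations: an upper arc nested inside an upper arc, a lower arc nested
inside a lower arc, an upper arc entirely to the left of a lower arc, or a lower arc
entirely to the left of an upper arc.  (Each unordered pair is counted exactly once.) -/
def alA (σ : Equiv.Perm (Fin n)) : ℕ :=
  ((Finset.univ ×ˢ Finset.univ).filter fun p : Fin n × Fin n =>
    ((((p.1 : ℕ) ≤ (σ p.1 : ℕ)) ↔ ((p.2 : ℕ) ≤ (σ p.2 : ℕ))) ∧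
      arcL σ p.1 < arcL σ p.2 ∧ arcR σ p.2 < arcR σ p.1) ∨
    (((p.1 : ℕ) ≤ (σ p.1 : ℕ)) ∧ ¬ ((p.2 : ℕ) ≤ (σ p.2 : ℕ)) ∧
      (arcR σ p.1 < arcL σ p.2 ∨ arcR σ p.2 < arcL σ p.1))).card

/-! ### Auxiliary machinery for the proof -/

/-- Number of upper arcs spanning the gap just below `t`. -/
def eA (σ : Equiv.Perm (Fin n)) (t : ℕ) : ℤ :=
  ∑ i : Fin n, if (i : ℕ) < t ∧ t ≤ (σ i : ℕ) then 1 else 0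

/-- Number of lower arcs spanning the gap just below `t`. -/
def dA (σ : Equiv.Perm (Fin n)) (t : ℕ) : ℤ :=
  ∑ i : Fin n, if (σ i : ℕ) < t ∧ t ≤ (i : ℕ) then 1 else 0

lemma eA_eq_dA (σ : Equiv.Perm (Fin n)) (t : ℕ) : eA σ t = dA σ t := by
  have h1 : ∑ i : Fin n, (if (σ i : ℕ) < t then (1:ℤ) else 0)
      = ∑ i : Fin n, (if (i : ℕ) < t then (1:ℤ) else 0) :=
    Equiv.sum_comp σ (fun x : Fin n => if (x : ℕ) < t then (1:ℤ) else 0)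
  have h2 : ∀ i : Fin n,
      (if (i : ℕ) < t ∧ t ≤ (σ i : ℕ) then (1:ℤ) else 0)
      = (if (σ i : ℕ) < t ∧ t ≤ (i : ℕ) then (1:ℤ) else 0)
        + ((if (i : ℕ) < t then (1:ℤ) else 0) - (if (σ i : ℕ) < t then (1:ℤ) else 0)) := by
    intro i; split_ifs <;> omega
  unfold eA dA
  rw [Finset.sum_congr rfl fun i _ => h2 i, Finset.sum_add_distrib,
    Finset.sum_sub_distrib, h1]
  ring

lemma eA_zero (σ : Equiv.Perm (Fin n)) : eA σ 0 = 0 := by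
  simp [eA]

lemma eA_top (σ : Equiv.Perm (Fin n)) : eA σ n = 0 := by
  unfold eA
  refine Finset.sum_eq_zero fun i _ => ?_
  have := (σ i).isLt
  rw [if_neg]; omega

lemma eA_step (σ : Equiv.Perm (Fin n)) (t : Fin n) :
    eA σ ((t : ℕ) + 1)
      = eA σ (t : ℕ) + (if (t : ℕ) ≤ (σ t : ℕ) then 1 else 0)
        - (if (σ.symm t : ℕ) ≤ (t : ℕ) then 1 else 0) := by
  have key : ∀ i : Fin n,
      (if (i : ℕ) < (t : ℕ) + 1 ∧ (t : ℕ) + 1 ≤ (σ i : ℕ) then (1:ℤ) else 0)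
      = (if (i : ℕ) < (t : ℕ) ∧ (t : ℕ) ≤ (σ i : ℕ) then (1:ℤ) else 0)
        + ((if (i : ℕ) = (t : ℕ) ∧ (t : ℕ) < (σ i : ℕ) then (1:ℤ) else 0)
        - (if (σ i : ℕ) = (t : ℕ) ∧ (i : ℕ) < (t : ℕ) then (1:ℤ) else 0)) := by
    intro i; split_ifs <;> omega
  have A : ∑ i : Fin n, (if (i : ℕ) = (t : ℕ) ∧ (t : ℕ) < (σ i : ℕ) then (1:ℤ) else 0)
      = (if (t : ℕ) < (σ t : ℕ) then (1:ℤ) else 0) := by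
    rw [Finset.sum_eq_single t]
    · simp
    · intro i _ hne
      rw [if_neg]
      rintro ⟨h1, -⟩
      exact hne (Fin.val_injective h1)
    · intro hmem; exact absurd (Finset.mem_univ t) hmem
  have B : ∑ i : Fin n, (if (σ i : ℕ) = (t : ℕ) ∧ (i : ℕ) < (t : ℕ) then (1:ℤ) else 0)
      = (if (σ.symm t : ℕ) < (t : ℕ) then (1:ℤ) else 0) := by
    have hrw := Equiv.sum_comp σ
      (fun s : Fin n => if (s : ℕ) = (t : ℕ) ∧ (σ.symm s : ℕ) < (t : ℕ) then (1:ℤ) else 0)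
    simp only [Equiv.symm_apply_apply] at hrw
    rw [hrw, Finset.sum_eq_single t]
    · simp
    · intro i _ hne
      rw [if_neg]
      rintro ⟨h1, -⟩
      exact hne (Fin.val_injective h1)
    · intro hmem; exact absurd (Finset.mem_univ t) hmem
  have main : eA σ ((t : ℕ) + 1)
      = eA σ (t : ℕ) + ((if (t : ℕ) < (σ t : ℕ) then (1:ℤ) else 0)
        - (if (σ.symm t : ℕ) < (t : ℕ) then (1:ℤ) else 0)) := by
    unfold eA
    rw [Finset.sum_congr rfl fun i _ => key i, Finset.sum_add_distrib,
      Finset.sum_sub_distrib, A, B]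
  rw [main]
  have hfix : (σ t = t) ↔ (σ.symm t = t) := by
    rw [Equiv.symm_apply_eq, eq_comm]
  have hfixv : ((σ t : ℕ) = (t : ℕ)) ↔ ((σ.symm t : ℕ) = (t : ℕ)) := by
    rw [Fin.val_eq_val, Fin.val_eq_val]; exact hfix
  split_ifs <;> first | ring1 | (exfalso; omega)

def hhA (σ : Equiv.Perm (Fin n)) (t : ℕ) : ℤ :=
  if ht : t < n then (if t ≤ (σ ⟨t, ht⟩ : ℕ) then 1 else 0) else 0

def ggA (σ : Equiv.Perm (Fin n)) (t : ℕ) : ℤ :=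
  if ht : t < n then (if (σ.symm ⟨t, ht⟩ : ℕ) ≤ t then 1 else 0) else 0

lemma hhA_val (σ : Equiv.Perm (Fin n)) (t : Fin n) :
    hhA σ (t : ℕ) = (if (t : ℕ) ≤ (σ t : ℕ) then (1:ℤ) else 0) := by
  simp only [hhA, dif_pos t.isLt, Fin.eta]

lemma ggA_val (σ : Equiv.Perm (Fin n)) (t : Fin n) :
    ggA σ (t : ℕ) = (if (σ.symm t : ℕ) ≤ (t : ℕ) then (1:ℤ) else 0) := by
  simp only [ggA, dif_pos t.isLt, Fin.eta]

lemma quadA (σ : Equiv.Perm (Fin n)) :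
    ∑ t : Fin n, (if (t : ℕ) ≤ (σ t : ℕ) then (1:ℤ) else 0) * eA σ (t : ℕ)
      = ∑ t : Fin n, (if (σ.symm t : ℕ) ≤ (t : ℕ) then (1:ℤ) else 0) * eA σ ((t : ℕ) + 1) := by
  have hstep : ∀ t ∈ Finset.range n, eA σ (t + 1) = eA σ t + hhA σ t - ggA σ t := by
    intro t ht
    rw [Finset.mem_range] at ht
    have := eA_step σ ⟨t, ht⟩
    simp only [hhA, ggA, dif_pos ht]
    simpa using this
  have hsq : ∀ t, hhA σ t * hhA σ t = hhA σ t := by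
    intro t; unfold hhA; split_ifs <;> ring
  have gsq : ∀ t, ggA σ t * ggA σ t = ggA σ t := by
    intro t; unfold ggA; split_ifs <;> ring
  have hgsum : ∑ t ∈ Finset.range n, hhA σ t = ∑ t ∈ Finset.range n, ggA σ t := by
    rw [← Fin.sum_univ_eq_sum_range (hhA σ) n, ← Fin.sum_univ_eq_sum_range (ggA σ) n,
      Finset.sum_congr rfl fun t _ => hhA_val σ t,
      Finset.sum_congr rfl fun t _ => ggA_val σ t]
    have hrw := Equiv.sum_comp σ
      (fun s : Fin n => if (σ.symm s : ℕ) ≤ (s : ℕ) then (1:ℤ) else 0)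
    simp only [Equiv.symm_apply_apply] at hrw
    exact hrw
  have tele : ∑ t ∈ Finset.range n, (eA σ (t+1)^2 - eA σ t^2) = 0 := by
    rw [Finset.sum_range_sub (fun t => eA σ t ^ 2) n, eA_top, eA_zero]; ring
  have expand : ∑ t ∈ Finset.range n, (eA σ (t+1)^2 - eA σ t^2)
      = ∑ t ∈ Finset.range n,
        (2*(hhA σ t * eA σ t) - 2*(ggA σ t * eA σ t) + hhA σ t + ggA σ t
          - 2*(hhA σ t * ggA σ t)) :=
    Finset.sum_congr rfl fun t ht => by
      linear_combination (eA σ (t+1) + eA σ t + hhA σ t - ggA σ t) * hstep t ht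
        + hsq t + gsq t
  have k2 : ∑ t ∈ Finset.range n, ggA σ t * eA σ (t+1)
      = ∑ t ∈ Finset.range n, (ggA σ t * eA σ t + hhA σ t * ggA σ t - ggA σ t) :=
    Finset.sum_congr rfl fun t ht => by
      linear_combination ggA σ t * hstep t ht - gsq t
  have e1 : ∑ t ∈ Finset.range n,
        (2*(hhA σ t * eA σ t) - 2*(ggA σ t * eA σ t) + hhA σ t + ggA σ t
          - 2*(hhA σ t * ggA σ t))
      = 2*(∑ t ∈ Finset.range n, hhA σ t * eA σ t)
        - 2*(∑ t ∈ Finset.range n, ggA σ t * eA σ t)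
        + (∑ t ∈ Finset.range n, hhA σ t) + (∑ t ∈ Finset.range n, ggA σ t)
        - 2*(∑ t ∈ Finset.range n, hhA σ t * ggA σ t) := by
    simp only [Finset.sum_add_distrib, Finset.sum_sub_distrib, ← Finset.mul_sum]
  have e2 : ∑ t ∈ Finset.range n, (ggA σ t * eA σ t + hhA σ t * ggA σ t - ggA σ t)
      = (∑ t ∈ Finset.range n, ggA σ t * eA σ t)
        + (∑ t ∈ Finset.range n, hhA σ t * ggA σ t)
        - (∑ t ∈ Finset.range n, ggA σ t) := by
    simp only [Finset.sum_add_distrib, Finset.sum_sub_distrib]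
  have goalL : ∑ t : Fin n, (if (t : ℕ) ≤ (σ t : ℕ) then (1:ℤ) else 0) * eA σ (t : ℕ)
      = ∑ t ∈ Finset.range n, hhA σ t * eA σ t := by
    rw [← Fin.sum_univ_eq_sum_range (fun t => hhA σ t * eA σ t) n]
    exact Finset.sum_congr rfl fun t _ => by rw [hhA_val σ t]
  have goalR : ∑ t : Fin n, (if (σ.symm t : ℕ) ≤ (t : ℕ) then (1:ℤ) else 0) * eA σ ((t : ℕ) + 1)
      = ∑ t ∈ Finset.range n, ggA σ t * eA σ (t + 1) := by
    rw [← Fin.sum_univ_eq_sum_range (fun t => ggA σ t * eA σ (t + 1)) n]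
    exact Finset.sum_congr rfl fun t _ => by rw [ggA_val σ t]
  rw [goalL, goalR]
  have H1 := (expand.symm.trans tele)
  rw [e1] at H1
  rw [k2, e2]
  linarith [hgsum, H1]

lemma card_filter_prod (P : Fin n × Fin n → Prop) [DecidablePred P] :
    (((Finset.univ ×ˢ Finset.univ).filter P).card : ℤ)
      = ∑ i : Fin n, ∑ j : Fin n, if P (i, j) then (1:ℤ) else 0 := by
  rw [Finset.card_filter]
  push_cast
  rw [Finset.sum_product]

/-- If a permutation `σ` of `[n]` has `k` weak excedances, then
`cro(σ) + al(σ) = (k-1)(n-k)`. -/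
theorem cro_add_al (n k : ℕ) (σ : Equiv.Perm (Fin n)) (h : wexA σ = k) :
    croA σ + alA σ = (k - 1) * (n - k) := by
  rcases Nat.eq_zero_or_pos n with hn | hn
  · subst hn
    have hk : k = 0 := by simpa [wexA] using h.symm
    simp [croA, alA, hk]
  · have hkn : k ≤ n := by
      rw [← h]
      exact le_trans (Finset.card_filter_le _ _) (by simp)
    have hk1 : 1 ≤ k := by
      rw [← h]
      refine Finset.card_pos.mpr ⟨σ.symm ⟨n - 1, by omega⟩, ?_⟩
      simp only [Finset.mem_filter, Finset.mem_univ, true_and]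
      rw [Equiv.apply_symm_apply]
      have := (σ.symm ⟨n - 1, by omega⟩).isLt
      simp only []
      omega
    zify [hk1, hkn]
    have hval : ∀ i j : Fin n, ((σ i : ℕ) = (σ j : ℕ)) ↔ ((i : ℕ) = (j : ℕ)) := by
      intro i j
      rw [Fin.val_eq_val, Fin.val_eq_val, Equiv.apply_eq_iff_eq]
    -- the six double sums
    have hcro : (croA σ : ℤ) = ∑ i : Fin n, ∑ j : Fin n,
        (if ((i : ℕ) < j ∧ (j : ℕ) ≤ σ i ∧ (σ i : ℕ) < σ j) ∨
            ((j : ℕ) < i ∧ (σ i : ℕ) < j ∧ (σ j : ℕ) < σ i) then (1:ℤ) else 0) := by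
      unfold croA; exact card_filter_prod _
    have hal : (alA σ : ℤ) = ∑ i : Fin n, ∑ j : Fin n,
        (if ((((i : ℕ) ≤ (σ i : ℕ)) ↔ ((j : ℕ) ≤ (σ j : ℕ))) ∧
              arcL σ i < arcL σ j ∧ arcR σ j < arcR σ i) ∨
            (((i : ℕ) ≤ (σ i : ℕ)) ∧ ¬ ((j : ℕ) ≤ (σ j : ℕ)) ∧
              (arcR σ i < arcL σ j ∨ arcR σ j < arcL σ i)) then (1:ℤ) else 0) := by
      unfold alA; exact card_filter_prod _
    -- pointwise identity
    have ptw : ∀ i j : Fin n,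
        (if ((i : ℕ) < j ∧ (j : ℕ) ≤ σ i ∧ (σ i : ℕ) < σ j) ∨
            ((j : ℕ) < i ∧ (σ i : ℕ) < j ∧ (σ j : ℕ) < σ i) then (1:ℤ) else 0)
        + (if ((((i : ℕ) ≤ (σ i : ℕ)) ↔ ((j : ℕ) ≤ (σ j : ℕ))) ∧
              arcL σ i < arcL σ j ∧ arcR σ j < arcR σ i) ∨
            (((i : ℕ) ≤ (σ i : ℕ)) ∧ ¬ ((j : ℕ) ≤ (σ j : ℕ)) ∧
              (arcR σ i < arcL σ j ∨ arcR σ j < arcL σ i)) then (1:ℤ) else 0)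
        + (if (i : ℕ) ≤ σ i ∧ (σ j : ℕ) < j ∧ (σ j : ℕ) ≤ σ i ∧ (i : ℕ) ≤ j
            then (1:ℤ) else 0)
        = (if (i : ℕ) < j ∧ (j : ℕ) ≤ σ i ∧ (j : ℕ) ≤ σ j then (1:ℤ) else 0)
          + (if (σ i : ℕ) < j ∧ (j : ℕ) < i ∧ (σ j : ℕ) < j then (1:ℤ) else 0)
          + (if (i : ℕ) ≤ σ i ∧ (σ j : ℕ) < j then (1:ℤ) else 0) := by
      intro i j
      have hv := hval i j
      by_cases h1 : (i : ℕ) ≤ (σ i : ℕ) <;> by_cases h2 : (j : ℕ) ≤ (σ j : ℕ) <;>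
        simp [arcL, arcR, h1, h2] <;> split_ifs <;> omega
    have main : (croA σ : ℤ) + (alA σ : ℤ)
        + (∑ i : Fin n, ∑ j : Fin n,
            if (i : ℕ) ≤ σ i ∧ (σ j : ℕ) < j ∧ (σ j : ℕ) ≤ σ i ∧ (i : ℕ) ≤ j then (1:ℤ) else 0)
        = (∑ i : Fin n, ∑ j : Fin n,
            if (i : ℕ) < j ∧ (j : ℕ) ≤ σ i ∧ (j : ℕ) ≤ σ j then (1:ℤ) else 0)
          + (∑ i : Fin n, ∑ j : Fin n,
            if (σ i : ℕ) < j ∧ (j : ℕ) < i ∧ (σ j : ℕ) < j then (1:ℤ) else 0)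
          + (∑ i : Fin n, ∑ j : Fin n,
            if (i : ℕ) ≤ σ i ∧ (σ j : ℕ) < j then (1:ℤ) else 0) := by
      rw [hcro, hal]
      simp only [← Finset.sum_add_distrib]
      exact Finset.sum_congr rfl fun i _ => Finset.sum_congr rfl fun j _ => ptw i j
    have hwex : (∑ i : Fin n, if (i : ℕ) ≤ (σ i : ℕ) then (1:ℤ) else 0) = (k:ℤ) := by
      rw [← h]; unfold wexA
      rw [Finset.card_filter]
      push_cast
      rfl
    have hnwex : (∑ j : Fin n, if (σ j : ℕ) < (j : ℕ) then (1:ℤ) else 0) = (n:ℤ) - k := by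
      have hpt : ∀ j : Fin n, (if (σ j : ℕ) < (j : ℕ) then (1:ℤ) else 0)
          = 1 - (if (j : ℕ) ≤ (σ j : ℕ) then (1:ℤ) else 0) := by
        intro j; split_ifs <;> omega
      rw [Finset.sum_congr rfl fun j _ => hpt j, Finset.sum_sub_distrib, hwex]
      simp [Finset.card_univ]
    have hSM : (∑ i : Fin n, ∑ j : Fin n,
          if (i : ℕ) ≤ σ i ∧ (σ j : ℕ) < j then (1:ℤ) else 0)
        = (k:ℤ) * ((n:ℤ) - k) := by
      rw [← hnwex, ← hwex, Finset.sum_mul_sum]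
      exact Finset.sum_congr rfl fun i _ => Finset.sum_congr rfl fun j _ => by
        by_cases hA : (i : ℕ) ≤ (σ i : ℕ) <;> by_cases hB : (σ j : ℕ) < (j : ℕ) <;>
          simp [hA, hB]
    have hZsplit : (∑ i : Fin n, ∑ j : Fin n,
          if (i : ℕ) ≤ σ i ∧ (σ j : ℕ) < j ∧ (σ j : ℕ) ≤ σ i ∧ (i : ℕ) ≤ j then (1:ℤ) else 0)
        = (∑ i : Fin n, ∑ j : Fin n,
            if (i : ℕ) < j ∧ (j : ℕ) ≤ σ i ∧ (σ j : ℕ) < j then (1:ℤ) else 0)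
          + (∑ i : Fin n, ∑ j : Fin n,
            if (i : ℕ) ≤ σ i ∧ (σ j : ℕ) ≤ σ i ∧ (σ i : ℕ) < j then (1:ℤ) else 0) := by
      simp only [← Finset.sum_add_distrib]
      refine Finset.sum_congr rfl fun i _ => Finset.sum_congr rfl fun j _ => ?_
      have hv := hval i j
      split_ifs <;> omega
    have hdiag : ∀ j : Fin n, (∑ i : Fin n,
        if (i : ℕ) = (j : ℕ) ∧ (σ j : ℕ) < (j : ℕ) then (1:ℤ) else 0)
        = (if (σ j : ℕ) < (j : ℕ) then (1:ℤ) else 0) := by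
      intro j
      rw [Finset.sum_eq_single j]
      · simp
      · intro i _ hne
        rw [if_neg]
        rintro ⟨h1, -⟩
        exact hne (Fin.val_injective h1)
      · intro hmem; exact absurd (Finset.mem_univ j) hmem
    have hZ1 : (∑ i : Fin n, ∑ j : Fin n,
          if (i : ℕ) < j ∧ (j : ℕ) ≤ σ i ∧ (σ j : ℕ) < j then (1:ℤ) else 0)
        = (∑ i : Fin n, ∑ j : Fin n,
            if (σ i : ℕ) < j ∧ (j : ℕ) < i ∧ (σ j : ℕ) < j then (1:ℤ) else 0)
          + ((n:ℤ) - k) := by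
      rw [Finset.sum_comm]
      have step1 : ∀ j : Fin n, (∑ i : Fin n,
          if (i : ℕ) < j ∧ (j : ℕ) ≤ σ i ∧ (σ j : ℕ) < j then (1:ℤ) else 0)
          = (if (σ j : ℕ) < (j : ℕ) then (1:ℤ) else 0) * eA σ (j : ℕ) := by
        intro j
        rw [eA, Finset.mul_sum]
        refine Finset.sum_congr rfl fun i _ => ?_
        by_cases hC : (σ j : ℕ) < (j : ℕ) <;> simp [hC]
      have step2 : ∀ j : Fin n, (if (σ j : ℕ) < (j : ℕ) then (1:ℤ) else 0) * eA σ (j : ℕ)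
          = (∑ i : Fin n,
              if (σ i : ℕ) < j ∧ (j : ℕ) < i ∧ (σ j : ℕ) < j then (1:ℤ) else 0)
            + (∑ i : Fin n,
              if (i : ℕ) = (j : ℕ) ∧ (σ j : ℕ) < (j : ℕ) then (1:ℤ) else 0) := by
        intro j
        rw [eA_eq_dA, dA, Finset.mul_sum, ← Finset.sum_add_distrib]
        refine Finset.sum_congr rfl fun i _ => ?_
        have hv := hval i j
        by_cases hC : (σ j : ℕ) < (j : ℕ) <;> simp [hC] <;> split_ifs <;> omega
      calc ∑ j : Fin n, ∑ i : Fin n,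
            (if (i : ℕ) < j ∧ (j : ℕ) ≤ σ i ∧ (σ j : ℕ) < j then (1:ℤ) else 0)
          = ∑ j : Fin n,
            ((∑ i : Fin n,
              if (σ i : ℕ) < j ∧ (j : ℕ) < i ∧ (σ j : ℕ) < j then (1:ℤ) else 0)
            + (∑ i : Fin n,
              if (i : ℕ) = (j : ℕ) ∧ (σ j : ℕ) < (j : ℕ) then (1:ℤ) else 0)) := by
            refine Finset.sum_congr rfl fun j _ => ?_
            rw [step1 j, step2 j]
        _ = (∑ j : Fin n, ∑ i : Fin n,
              if (σ i : ℕ) < j ∧ (j : ℕ) < i ∧ (σ j : ℕ) < j then (1:ℤ) else 0)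
            + ((n:ℤ) - k) := by
            rw [Finset.sum_add_distrib, ← hnwex]
            congr 1
            exact Finset.sum_congr rfl fun j _ => hdiag j
        _ = (∑ i : Fin n, ∑ j : Fin n,
              if (σ i : ℕ) < j ∧ (j : ℕ) < i ∧ (σ j : ℕ) < j then (1:ℤ) else 0)
            + ((n:ℤ) - k) := by rw [Finset.sum_comm]
    have hZ2 : (∑ i : Fin n, ∑ j : Fin n,
          if (i : ℕ) ≤ σ i ∧ (σ j : ℕ) ≤ σ i ∧ (σ i : ℕ) < j then (1:ℤ) else 0)
        = (∑ i : Fin n, ∑ j : Fin n,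
            if (i : ℕ) < j ∧ (j : ℕ) ≤ σ i ∧ (j : ℕ) ≤ σ j then (1:ℤ) else 0) := by
      have lhs1 : ∀ i : Fin n, (∑ j : Fin n,
          if (i : ℕ) ≤ σ i ∧ (σ j : ℕ) ≤ σ i ∧ (σ i : ℕ) < j then (1:ℤ) else 0)
          = (if ((σ.symm (σ i) : ℕ)) ≤ ((σ i : ℕ)) then (1:ℤ) else 0)
            * eA σ ((σ i : ℕ) + 1) := by
        intro i
        rw [eA_eq_dA, dA, Finset.mul_sum]
        refine Finset.sum_congr rfl fun j _ => ?_
        by_cases hC : (i : ℕ) ≤ (σ i : ℕ) <;>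
          simp only [Equiv.symm_apply_apply] <;> simp [hC] <;> split_ifs <;> omega
      have rhs1 : ∀ j : Fin n, (∑ i : Fin n,
          if (i : ℕ) < j ∧ (j : ℕ) ≤ σ i ∧ (j : ℕ) ≤ σ j then (1:ℤ) else 0)
          = (if (j : ℕ) ≤ (σ j : ℕ) then (1:ℤ) else 0) * eA σ (j : ℕ) := by
        intro j
        rw [eA, Finset.mul_sum]
        refine Finset.sum_congr rfl fun i _ => ?_
        by_cases hC : (j : ℕ) ≤ (σ j : ℕ) <;> simp [hC] <;> split_ifs <;> omega
      calc (∑ i : Fin n, ∑ j : Fin n,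
            if (i : ℕ) ≤ σ i ∧ (σ j : ℕ) ≤ σ i ∧ (σ i : ℕ) < j then (1:ℤ) else 0)
          = ∑ i : Fin n, (if ((σ.symm (σ i) : ℕ)) ≤ ((σ i : ℕ)) then (1:ℤ) else 0)
              * eA σ ((σ i : ℕ) + 1) :=
            Finset.sum_congr rfl fun i _ => lhs1 i
        _ = ∑ s : Fin n, (if ((σ.symm s : ℕ)) ≤ ((s : ℕ)) then (1:ℤ) else 0)
              * eA σ ((s : ℕ) + 1) :=
            Equiv.sum_comp σ (fun s : Fin n =>
              (if ((σ.symm s : ℕ)) ≤ ((s : ℕ)) then (1:ℤ) else 0) * eA σ ((s : ℕ) + 1))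
        _ = ∑ t : Fin n, (if (t : ℕ) ≤ (σ t : ℕ) then (1:ℤ) else 0) * eA σ (t : ℕ) :=
            (quadA σ).symm
        _ = ∑ j : Fin n, ∑ i : Fin n,
              (if (i : ℕ) < j ∧ (j : ℕ) ≤ σ i ∧ (j : ℕ) ≤ σ j then (1:ℤ) else 0) :=
            (Finset.sum_congr rfl fun j _ => rhs1 j).symm
        _ = ∑ i : Fin n, ∑ j : Fin n,
              (if (i : ℕ) < j ∧ (j : ℕ) ≤ σ i ∧ (j : ℕ) ≤ σ j then (1:ℤ) else 0) :=
            Finset.sum_comm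
    have hexp : ((k:ℤ) - 1) * ((n:ℤ) - k) = (k:ℤ) * ((n:ℤ) - k) - ((n:ℤ) - k) := by ring
    linarith [main, hZsplit, hZ1, hZ2, hSM, hexp]

end TypeA
end

section
/- The map π ↦ π⁻, where π⁻ = (-π_1)π_2⋯π_n, is a bijection from B_n⁺ = {π ∈ B_n : π_1 > 0} to B_n⁻ = {π ∈ B_n : π_1 < 0} satisfying cro(π) = cro(π⁻), neg(π⁻) = neg(π) + 1, and fwex(π⁻) = fwex(π) - 1. -/
open Finset

namespace BPerm

/-- The map `π ↦ π⁻`, which negates the first entry of a signed permutation. -/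
def negFirst (π : BPerm n) : BPerm n :=
  (π.1, fun i => if (i : ℕ) = 0 then !(π.2 i) else π.2 i)

lemma vseq_ne_zero (π : BPerm n) {k : ℕ} (h1 : 1 ≤ k) (h2 : k ≤ n) : vseq π k ≠ 0 := by
  unfold vseq
  rw [dif_pos ⟨h1, h2⟩]
  split_ifs <;> intro h <;> omega

lemma vseq_negFirst (π : BPerm n) (k : ℕ) :
    vseq (negFirst π) k = if k = 1 then -vseq π k else vseq π k := by
  unfold vseq negFirst
  by_cases h : 0 < k ∧ k ≤ n
  · simp only [dif_pos h]
    by_cases hk : k = 1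
    · subst hk
      have h0 : ((⟨1 - 1, by omega⟩ : Fin n) : ℕ) = 0 := rfl
      simp only [if_pos rfl, h0]
      cases h2 : π.2 ⟨1 - 1, by omega⟩ <;> simp [h2] <;> ring
    · have : ((⟨k - 1, by omega⟩ : Fin n) : ℕ) ≠ 0 := by simp; omega
      simp only [if_neg this, if_neg hk]
  · simp only [dif_neg h]
    split_ifs <;> simp

lemma negFirst_negFirst (π : BPerm n) : negFirst (negFirst π) = π := by
  unfold negFirst
  refine Prod.ext rfl ?_
  funext i
  by_cases h : (i : ℕ) = 0 <;> simp [h]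

lemma neg_negFirst (hn : 1 ≤ n) (π : BPerm n) (hπ : 0 < vseq π 1) :
    neg (negFirst π) = neg π + 1 := by
  unfold neg
  have h1 : (Finset.Icc 1 n).filter (fun i => vseq (negFirst π) i < 0)
      = insert 1 ((Finset.Icc 1 n).filter fun i => vseq π i < 0) := by
    ext i
    simp only [mem_filter, mem_insert, mem_Icc, vseq_negFirst]
    by_cases h : i = 1 <;> simp [h] <;> omega
  rw [h1, card_insert_of_notMem (by simp; omega)]

lemma wex_negFirst (hn : 1 ≤ n) (π : BPerm n) (hπ : 0 < vseq π 1) :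
    wex (negFirst π) + 1 = wex π := by
  unfold wex
  have h1 : (Finset.Icc 1 n).filter (fun i : ℕ => (i:ℤ) ≤ vseq π i)
      = insert 1 ((Finset.Icc 1 n).filter fun i : ℕ => (i:ℤ) ≤ vseq (negFirst π) i) := by
    ext i
    simp only [mem_filter, mem_insert, mem_Icc, vseq_negFirst]
    by_cases h : i = 1 <;> simp [h] <;> omega
  rw [h1, card_insert_of_notMem (by simp [vseq_negFirst]; omega)]

lemma cro_negFirst (π : BPerm n) (hπ : 0 < vseq π 1) :
    cro (negFirst π) = cro π := by
  unfold cro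
  congr 1
  apply filter_congr
  rintro ⟨i, j⟩ hp
  simp only [Finset.mem_product, mem_Icc] at hp
  have ha := vseq_ne_zero π hp.1.1 hp.1.2
  have hb := vseq_ne_zero π hp.2.1 hp.2.2
  simp only [vseq_negFirst]
  by_cases hi : i = 1
  · subst hi
    by_cases hj : j = 1
    · subst hj; simp only [if_pos rfl]; omega
    · simp only [if_pos rfl, if_neg hj]; omega
  · by_cases hj : j = 1
    · subst hj; simp only [if_pos rfl, if_neg hi]; omega
    · simp only [if_neg hi, if_neg hj]

/-- The map `π ↦ π⁻` is a bijection from `B_n⁺ = {π : π_1 > 0}` to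
`B_n⁻ = {π : π_1 < 0}` with `cro(π⁻) = cro(π)`, `neg(π⁻) = neg(π) + 1` and
`fwex(π⁻) = fwex(π) - 1`. -/
theorem negFirst_bijOn (n : ℕ) (hn : 1 ≤ n) :
    Set.BijOn (negFirst (n := n)) {π | 0 < vseq π 1} {π | vseq π 1 < 0} ∧
    ∀ π : BPerm n, 0 < vseq π 1 →
      cro (negFirst π) = cro π ∧ neg (negFirst π) = neg π + 1 ∧
      fwex (negFirst π) = fwex π - 1 := by
  have key : ∀ π : BPerm n, 0 < vseq π 1 → vseq (negFirst π) 1 < 0 := by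
    intro π hπ
    have := vseq_negFirst π 1
    simp at this
    omega
  refine ⟨⟨?_, ?_, ?_⟩, ?_⟩
  · intro π hπ
    exact key π hπ
  · intro a _ b _ h
    have := congrArg negFirst h
    rwa [negFirst_negFirst, negFirst_negFirst] at this
  · intro τ hτ
    have h1 : 0 < vseq (negFirst τ) 1 := by
      have := vseq_negFirst τ 1
      simp at this
      simp only [Set.mem_setOf_eq] at hτ
      omega
    exact ⟨negFirst τ, h1, negFirst_negFirst τ⟩
  · intro π hπ
    have hw := wex_negFirst hn π hπ
    have hne := neg_negFirst hn π hπ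
    refine ⟨cro_negFirst π hπ, hne, ?_⟩
    unfold fwex
    omega

end BPerm
end

section
/- For any n ≥ 0 and 0 ≤ k ≤ n, (k+1)/(n+1) · C(n+1, j) · C(n+1, n-k-j) = C(n,j)·C(n,j+k) - C(n,j-1)·C(n,j+k+1) for all 0 ≤ j ≤ n-k. -/
/-- Binomial coefficient `C(a, b)` with an integer lower index, with the convention
`C(a, b) = 0` for `b < 0`. -/
def chooseZ (a : ℕ) (b : ℤ) : ℤ := if 0 ≤ b then (a.choose b.toNat : ℤ) else 0

/-- For `0 ≤ k ≤ n` and `0 ≤ j ≤ n - k`: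
`(k+1)/(n+1) · C(n+1,j) · C(n+1,n-k-j) = C(n,j)C(n,j+k) - C(n,j-1)C(n,j+k+1)`;
equivalently `(k+1)·C(n+1,j)·C(n+1,n-k-j) = (n+1)·(C(n,j)C(n,j+k) - C(n,j-1)C(n,j+k+1))`. -/
theorem lagrange_binomial_identity (n k j : ℕ) (hk : k ≤ n) (hj : j ≤ n - k) :
    (((k : ℚ) + 1) / ((n : ℚ) + 1)) * ((n + 1).choose j) * ((n + 1).choose (n - k - j))
      = (n.choose j) * (n.choose (j + k))
        - (chooseZ n ((j : ℤ) - 1) : ℚ) * (n.choose (j + k + 1)) ∧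
    ((k : ℤ) + 1) * ((n + 1).choose j) * ((n + 1).choose (n - k - j))
      = ((n : ℤ) + 1) * ((n.choose j) * (n.choose (j + k))
        - chooseZ n ((j : ℤ) - 1) * (n.choose (j + k + 1))) := by
  have hjn : j + k ≤ n := by omega
  have hsymm : (n + 1).choose (n - k - j) = (n + 1).choose (j + k + 1) := by
    have : n - k - j = (n + 1) - (j + k + 1) := by omega
    rw [this, Nat.choose_symm (by omega)]
  set a : ℤ := ((n + 1).choose j : ℤ) with ha
  set b : ℤ := ((n + 1).choose (j + k + 1) : ℤ) with hb
  -- h1 : (n+1) * C(n,j) = a * (n+1-j)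
  have h1 : ((n : ℤ) + 1) * (n.choose j : ℤ) = a * ((n : ℤ) + 1 - j) := by
    have := Nat.choose_mul_succ_eq n j
    have hc : ((n.choose j * (n + 1) : ℕ) : ℤ) = (((n + 1).choose j * (n + 1 - j) : ℕ) : ℤ) := by
      exact_mod_cast congrArg (Nat.cast : ℕ → ℤ) this
    push_cast [Nat.cast_sub (show j ≤ n + 1 by omega)] at hc
    linarith [hc]
  -- h2 : (n+1) * C(n,j+k) = b * (j+k+1)
  have h2 : ((n : ℤ) + 1) * (n.choose (j + k) : ℤ) = b * ((j : ℤ) + k + 1) := by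
    have := Nat.add_one_mul_choose_eq n (j + k)
    have hc : (((n + 1) * n.choose (j + k) : ℕ) : ℤ)
        = (((n + 1).choose (j + k + 1) * (j + k + 1) : ℕ) : ℤ) := by
      exact_mod_cast congrArg (Nat.cast : ℕ → ℤ) this
    push_cast at hc
    linarith [hc]
  -- h3 : (n+1) * chooseZ n (j-1) = a * j
  have h3 : ((n : ℤ) + 1) * chooseZ n ((j : ℤ) - 1) = a * (j : ℤ) := by
    cases j with
    | zero => simp [chooseZ]
    | succ m =>
      have hz : chooseZ n ((m + 1 : ℕ) - 1 : ℤ) = (n.choose m : ℤ) := by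
        simp [chooseZ]
      rw [hz]
      have := Nat.add_one_mul_choose_eq n m
      have hc : (((n + 1) * n.choose m : ℕ) : ℤ)
          = (((n + 1).choose (m + 1) * (m + 1) : ℕ) : ℤ) := by
        exact_mod_cast congrArg (Nat.cast : ℕ → ℤ) this
      push_cast at hc ⊢
      linarith [hc]
  -- h4 : (n+1) * C(n,j+k+1) = b * (n-j-k)
  have h4 : ((n : ℤ) + 1) * (n.choose (j + k + 1) : ℤ) = b * ((n : ℤ) - j - k) := by
    have := Nat.choose_mul_succ_eq n (j + k + 1)
    have hc : ((n.choose (j + k + 1) * (n + 1) : ℕ) : ℤ)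
        = (((n + 1).choose (j + k + 1) * (n + 1 - (j + k + 1)) : ℕ) : ℤ) := by
      exact_mod_cast congrArg (Nat.cast : ℕ → ℤ) this
    push_cast [Nat.cast_sub (show j + k + 1 ≤ n + 1 by omega), Nat.cast_sub hjn] at hc
    linarith [hc]
  have key : ((k : ℤ) + 1) * a * b
      = ((n : ℤ) + 1) * ((n.choose j : ℤ) * (n.choose (j + k) : ℤ)
        - chooseZ n ((j : ℤ) - 1) * (n.choose (j + k + 1) : ℤ)) := by
    have hne : ((n : ℤ) + 1) ≠ 0 := by positivity
    apply mul_left_cancel₀ hne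
    linear_combination (-((n : ℤ) + 1) * (n.choose (j + k) : ℤ)) * h1
      - (a * ((n : ℤ) + 1 - j)) * h2
      + (((n : ℤ) + 1) * (n.choose (j + k + 1) : ℤ)) * h3
      + (a * (j : ℤ)) * h4
  have goal2 : ((k : ℤ) + 1) * ((n + 1).choose j) * ((n + 1).choose (n - k - j))
      = ((n : ℤ) + 1) * ((n.choose j) * (n.choose (j + k))
        - chooseZ n ((j : ℤ) - 1) * (n.choose (j + k + 1))) := by
    rw [hsymm]; exact key
  refine ⟨?_, goal2⟩
  have hq : ((k : ℚ) + 1) * ((n + 1).choose j : ℚ) * ((n + 1).choose (n - k - j) : ℚ)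
      = ((n : ℚ) + 1) * ((n.choose j : ℚ) * (n.choose (j + k) : ℚ)
        - (chooseZ n ((j : ℤ) - 1) : ℚ) * (n.choose (j + k + 1) : ℚ)) := by
    exact_mod_cast goal2
  have hne : ((n : ℚ) + 1) ≠ 0 := by positivity
  field_simp
  linear_combination hq
end

section
/- In the polynomial ring ℤ[y], if C(z) is the formal power series compositional inverse of z/((1+z)(1+y²z)), then for all n ≥ k ≥ 0, the coefficient of z^{n+1} in C(z)^{k+1} equals Σ_{j=0}^{n-k} y^{2j} (C(n,j)C(n,j+k) - C(n,j-1)C(n,j+k+1)). -/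
/-!
Writing `a = y²`, the equation `G = z (1 + G) (1 + a G)` gives
`G^(k+1) = z (G^k + (1 + a) G^(k+1) + a G^(k+2))`, so `f n k = [z^(n+1)] G^(k+1)` satisfies
`f (n+1) (k+1) = f n k + (1 + a) f n (k+1) + a f n (k+2)` and
`f (n+1) 0 = (1 + a) f n 0 + a f n 1`, with `f 0 k = [k = 0]`.
With `S n k = ∑ⱼ aʲ C(n,j) C(n,j+k)` (`choosePairSum`), Pascal's rule shows that
`S n k - a S n (k+2)` satisfies the same recurrences, and the sum of the theorem is
`S n k - a S n (k+2)` after shifting `j`.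
-/

open Finset

lemma chooseZ_natCast (n m : ℕ) : chooseZ n m = n.choose m := by
  simp [chooseZ]

section ChooseSum

variable {R : Type*} [CommRing R] (a : R)

lemma sum_range_succ_pow_mul_choose_succ (n : ℕ) (g : ℕ → R) :
    ∑ j ∈ range (n + 2), a ^ j * ((n + 1).choose j : R) * g j
      = ∑ j ∈ range (n + 1), a ^ j * (n.choose j : R) * (g j + a * g (j + 1)) := by
  have hshift := sum_range_succ' (fun j => a ^ j * (n.choose j : R) * g j) (n + 1)
  rw [sum_range_succ, Nat.choose_succ_self, Nat.cast_zero, mul_zero, zero_mul, add_zero] at hshift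
  have hpow : ∑ j ∈ range (n + 1), a ^ j * (n.choose j : R) * (a * g (j + 1))
      = ∑ j ∈ range (n + 1), a ^ (j + 1) * (n.choose j : R) * g (j + 1) :=
    sum_congr rfl fun _ _ => by ring
  rw [sum_range_succ']
  simp only [mul_add, sum_add_distrib, hshift, hpow, Nat.choose_succ_succ', Nat.cast_add,
    add_mul, Nat.choose_zero_right]
  ring

noncomputable def choosePairSum (n k : ℕ) : R :=
  ∑ j ∈ range (n + 1), a ^ j * (n.choose j : R) * (n.choose (j + k) : R)

lemma sum_range_eq_choosePairSum {n k N : ℕ} (hN : n < N + k) :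
    ∑ j ∈ range N, a ^ j * (n.choose j : R) * (n.choose (j + k) : R) = choosePairSum a n k := by
  have hsupp : ∀ M, n < M + k →
      ∑ j ∈ range M, a ^ j * (n.choose j : R) * (n.choose (j + k) : R)
        = ∑ j ∈ range (n + 1 - k), a ^ j * (n.choose j : R) * (n.choose (j + k) : R) := by
    intro M hM
    refine (sum_subset (range_subset_range.2 (by omega)) fun j _ hj => ?_).symm
    rw [Nat.choose_eq_zero_of_lt (by simp at hj; omega : n < j + k), Nat.cast_zero, mul_zero]
  rw [hsupp N hN, choosePairSum, hsupp (n + 1) (by omega)]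

lemma choosePairSum_zero_left (k : ℕ) : choosePairSum a 0 k = (Nat.choose 0 k : R) := by
  simp [choosePairSum]

lemma choosePairSum_succ_succ (n k : ℕ) :
    choosePairSum a (n + 1) (k + 1)
      = choosePairSum a n k + (1 + a) * choosePairSum a n (k + 1)
        + a * choosePairSum a n (k + 1 + 1) := by
  rw [choosePairSum, sum_range_succ_pow_mul_choose_succ]
  simp only [choosePairSum, mul_sum, ← sum_add_distrib]
  refine sum_congr rfl fun j _ => ?_
  simp only [← add_assoc, Nat.add_right_comm j 1 k, Nat.choose_succ_succ', Nat.cast_add]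
  ring

lemma choosePairSum_succ_zero (n : ℕ) :
    choosePairSum a (n + 1) 0 = (1 + a) * choosePairSum a n 0 + 2 * a * choosePairSum a n 1 := by
  -- Pascal's rule on the other factor `C(n+1, j)`, after extending the range by one.
  have hmixed : ∑ j ∈ range (n + 1), a ^ j * (n.choose j : R) * ((n + 1).choose j : R)
      = choosePairSum a n 0 + a * choosePairSum a n 1 :=
    calc _ = ∑ j ∈ range (n + 2), a ^ j * ((n + 1).choose j : R) * (n.choose j : R) := by
          rw [sum_range_succ _ (n + 1), Nat.choose_succ_self, Nat.cast_zero, mul_zero, add_zero]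
          exact sum_congr rfl fun _ _ => by ring
      _ = _ := by
          rw [sum_range_succ_pow_mul_choose_succ]
          simp only [choosePairSum, mul_sum, ← sum_add_distrib, add_zero]
          exact sum_congr rfl fun _ _ => by ring
  rw [choosePairSum, sum_range_succ_pow_mul_choose_succ]
  simp only [add_zero, mul_add, sum_add_distrib, hmixed]
  simp only [choosePairSum, mul_sum, ← sum_add_distrib, add_zero]
  exact sum_congr rfl fun j _ => by
    rw [Nat.choose_succ_succ', Nat.cast_add]
    ring

noncomputable def choosePairDiff (n k : ℕ) : R :=
  choosePairSum a n k - a * choosePairSum a n (k + 1 + 1)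

lemma choosePairDiff_zero_left (k : ℕ) : choosePairDiff a 0 k = 0 ^ k := by
  cases k <;> simp [choosePairDiff, choosePairSum_zero_left]

lemma choosePairDiff_succ_succ (n k : ℕ) :
    choosePairDiff a (n + 1) (k + 1)
      = choosePairDiff a n k + (1 + a) * choosePairDiff a n (k + 1)
        + a * choosePairDiff a n (k + 1 + 1) := by
  simp only [choosePairDiff, choosePairSum_succ_succ]
  ring

lemma choosePairDiff_succ_zero (n : ℕ) :
    choosePairDiff a (n + 1) 0 = (1 + a) * choosePairDiff a n 0 + a * choosePairDiff a n 1 := by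
  simp only [choosePairDiff, choosePairSum_succ_zero, choosePairSum_succ_succ]
  ring

lemma sum_range_sub_chooseZ_eq_choosePairDiff (n k : ℕ) :
    ∑ j ∈ range (n - k + 1), a ^ j * (((n.choose j : ℤ) * (n.choose (j + k))
        - chooseZ n ((j : ℤ) - 1) * (n.choose (j + k + 1)) : ℤ) : R)
      = choosePairDiff a n k := by
  have hlead := sum_range_eq_choosePairSum a (n := n) (k := k) (N := n - k + 1) (by omega)
  have htail := sum_range_eq_choosePairSum a (n := n) (k := k + 1 + 1) (N := n - k) (by omega)
  have hshift : ∑ j ∈ range (n - k + 1),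
      a ^ j * (chooseZ n ((j : ℤ) - 1) : R) * (n.choose (j + k + 1) : R)
        = a * choosePairSum a n (k + 1 + 1) := by
    have hneg : chooseZ n (-1) = 0 := rfl
    rw [sum_range_succ', ← htail, mul_sum]
    simp only [Nat.cast_add, Nat.cast_one, Nat.cast_zero, add_sub_cancel_right, zero_sub, hneg,
      chooseZ_natCast, Int.cast_natCast, Int.cast_zero, mul_zero, zero_mul, add_zero]
    exact sum_congr rfl fun j _ => by
      rw [show j + 1 + k + 1 = j + (k + 1 + 1) by omega]
      ring
  simp only [Int.cast_sub, Int.cast_mul, Int.cast_natCast, mul_sub, sum_sub_distrib, ← mul_assoc,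
    hlead, hshift, choosePairDiff]

end ChooseSum

section CompositionalInverse

open PowerSeries

variable {R : Type*} [CommRing R] {a : R} {G : PowerSeries R}

lemma coeff_succ_pow_succ_of_eq (hG : G = X * (1 + G) * (1 + C a * G)) (m k : ℕ) :
    coeff (m + 1) (G ^ (k + 1))
      = coeff m (G ^ k) + (1 + a) * coeff m (G ^ (k + 1)) + a * coeff m (G ^ (k + 1 + 1)) := by
  have hpow : G ^ (k + 1) = X * (G ^ k + C (1 + a) * G ^ (k + 1) + C a * G ^ (k + 1 + 1)) := by
    rw [pow_succ, map_add, map_one]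
    nth_rewrite 2 [hG]
    ring
  rw [congrArg (coeff (m + 1)) hpow, coeff_succ_X_mul, map_add, map_add, coeff_C_mul, coeff_C_mul]

lemma coeff_succ_pow_succ_eq_choosePairDiff (hG : G = X * (1 + G) * (1 + C a * G)) (n k : ℕ) :
    coeff (n + 1) (G ^ (k + 1)) = choosePairDiff a n k := by
  have h0 : constantCoeff G = 0 := by
    rw [hG, map_mul, map_mul, constantCoeff_X, zero_mul, zero_mul]
  induction n generalizing k with
  | zero =>
    simp [coeff_succ_pow_succ_of_eq hG, coeff_zero_eq_constantCoeff, h0, choosePairDiff_zero_left]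
  | succ n ih =>
    cases k with
    | zero =>
      rw [coeff_succ_pow_succ_of_eq hG, ih, ih, choosePairDiff_succ_zero, pow_zero, coeff_one]
      simp
    | succ k =>
      rw [coeff_succ_pow_succ_of_eq hG, ih, ih, ih, choosePairDiff_succ_succ]

end CompositionalInverse

theorem coeff_comp_inverse_pow_general (G : PowerSeries (Polynomial ℤ))
    (hG : G = PowerSeries.X * (1 + G) *
      (1 + PowerSeries.C (R := Polynomial ℤ) (Polynomial.X ^ 2) * G))
    (n k : ℕ) :
    PowerSeries.coeff (R := Polynomial ℤ) (n + 1) (G ^ (k + 1))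
      = ∑ j ∈ Finset.range (n - k + 1),
          Polynomial.X ^ (2 * j) *
            Polynomial.C ((n.choose j : ℤ) * (n.choose (j + k))
              - chooseZ n ((j : ℤ) - 1) * (n.choose (j + k + 1))) := by
  rw [coeff_succ_pow_succ_eq_choosePairDiff hG, ← sum_range_sub_chooseZ_eq_choosePairDiff]
  simp only [pow_mul, eq_intCast]

/-- If `G(z)` is the formal power series compositional inverse of `z/((1+z)(1+y²z))` over
`ℤ[y]` — equivalently, `G(0) = 0` and `G = z(1+G)(1+y²G)` — then for `n ≥ k ≥ 0` the
coefficient of `z^{n+1}` in `G^{k+1}` equals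
`Σ_{j=0}^{n-k} y^{2j} (C(n,j)C(n,j+k) - C(n,j-1)C(n,j+k+1))`. -/
theorem coeff_comp_inverse_pow (G : PowerSeries (Polynomial ℤ))
    (h0 : PowerSeries.constantCoeff (R := Polynomial ℤ) G = 0)
    (hG : G = PowerSeries.X * (1 + G) *
      (1 + PowerSeries.C (R := Polynomial ℤ) (Polynomial.X ^ 2) * G))
    (n k : ℕ) (hk : k ≤ n) :
    PowerSeries.coeff (R := Polynomial ℤ) (n + 1) (G ^ (k + 1))
      = ∑ j ∈ Finset.range (n - k + 1),
          Polynomial.X ^ (2 * j) *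
            Polynomial.C ((n.choose j : ℤ) * (n.choose (j + k))
              - chooseZ n ((j : ℤ) - 1) * (n.choose (j + k + 1))) :=
  coeff_comp_inverse_pow_general G hG n k
end

section
/- The alternating sum Σ_{k=0}^{⌊n - i/2⌋} (-1)^k C(n, k + ⌊i/2⌋) equals C(n-1, ⌈i/2⌉ - 1) for 1 ≤ i ≤ 2n; consequently Σ_{i=1}^{2n} y^i C(n,⌊i/2⌋) C(n-1,⌈i/2⌉-1) = Σ_{k=0}^n (-1)^k Σ_{i=0}^{2n-2k} y^i C(n, k+⌈i/2⌉) C(n, ⌊i/2⌋) as polynomials in y. -/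
/-!
Pascal's rule `C(n+1, j+1) = C(n, j) + C(n, j+1)` makes the alternating tail sum
`Σ_k (-1)^k C(n+1, k+m+1)` telescope to `C(n, m)`. For the polynomial identity, distribute
`(-1)^k` and swap the two sums on the right: the coefficient of `y^i` becomes
`C(n, ⌊i/2⌋)` times such an alternating sum with `m = ⌈i/2⌉`. For `i ≥ 1` this is
`C(n-1, ⌈i/2⌉-1)`, and for `i = 0` it is the full alternating sum `Σ_k (-1)^k C(n, k) = 0`.
-/

open Finset

theorem sum_range_neg_one_pow_mul_choose_succ_add_succ {R : Type*} [Ring R] (n m : ℕ) :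
    ∑ k ∈ range (n - m + 1), (-1 : R) ^ k * ((n + 1).choose (k + m + 1) : R) = n.choose m := by
  set f : ℕ → R := fun k => (-1 : R) ^ k * (n.choose (k + m) : R)
  have pascal (k : ℕ) : (-1 : R) ^ k * ((n + 1).choose (k + m + 1) : R) = f k - f (k + 1) := by
    simp only [f, Nat.choose_succ_succ', Nat.cast_add, pow_succ, mul_neg_one, neg_mul, mul_add,
      sub_neg_eq_add, add_right_comm k 1 m]
  have tail_vanishes : n.choose (n - m + 1 + m) = 0 := Nat.choose_eq_zero_of_lt (by omega)
  rw [sum_congr rfl fun k _ => pascal k, sum_range_sub']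
  simp [f, tail_vanishes]

theorem sum_range_neg_one_pow_mul_choose_add {R : Type*} [Ring R] {n m : ℕ} (hn : 1 ≤ n)
    (hm : 1 ≤ m) :
    ∑ k ∈ range (n - m + 1), (-1 : R) ^ k * (n.choose (k + m) : R) = (n - 1).choose (m - 1) := by
  obtain ⟨n, rfl⟩ := Nat.exists_eq_add_of_le' hn
  obtain ⟨m, rfl⟩ := Nat.exists_eq_add_of_le' hm
  simpa [← add_assoc] using sum_range_neg_one_pow_mul_choose_succ_add_succ (R := R) n m

theorem sum_range_neg_one_pow_mul_choose {R : Type*} [Ring R] {n : ℕ} (hn : n ≠ 0) :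
    ∑ k ∈ range (n + 1), (-1 : R) ^ k * (n.choose k : R) = 0 := by
  exact_mod_cast congrArg (Int.cast : ℤ → R) (Int.alternating_sum_range_choose_of_ne hn)

/-- Both sides sum over the pairs `(k, i)` with `k + ⌈i/2⌉ ≤ n`. -/
theorem sum_range_sum_range_two_mul_sub_comm {M : Type*} [AddCommMonoid M] (n : ℕ)
    (f : ℕ → ℕ → M) :
    ∑ k ∈ range (n + 1), ∑ i ∈ range (2 * n - 2 * k + 1), f k i
      = ∑ i ∈ range (2 * n + 1), ∑ k ∈ range (n - (i + 1) / 2 + 1), f k i :=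
  sum_comm' fun k i => by simp only [mem_range]; omega

/-- For `n ≥ 1` and `1 ≤ i ≤ 2n`, the alternating sum
`Σ_{k=0}^{⌊n-i/2⌋} (-1)^k C(n, k + ⌈i/2⌉) = C(n-1, ⌈i/2⌉ - 1)` (an instance of the standard
fact `Σ_k (-1)^k C(n, k+m) = C(n-1, m-1)`); consequently, as polynomials in `y`,
`Σ_{i=1}^{2n} y^i C(n,⌊i/2⌋) C(n-1,⌈i/2⌉-1)
  = Σ_{k=0}^{n} (-1)^k Σ_{i=0}^{2n-2k} y^i C(n, k+⌈i/2⌉) C(n, ⌊i/2⌋)`. -/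
theorem alternating_binomial_sum (n : ℕ) (hn : 1 ≤ n) :
    (∀ i : ℕ, 1 ≤ i → i ≤ 2 * n →
      ∑ k ∈ Finset.range (n - (i + 1) / 2 + 1),
          (-1 : ℤ) ^ k * (n.choose (k + (i + 1) / 2))
        = ((n - 1).choose ((i + 1) / 2 - 1) : ℤ)) ∧
    (∑ i ∈ Finset.Icc 1 (2 * n),
        ((n.choose (i / 2) * (n - 1).choose ((i + 1) / 2 - 1) : ℕ) : Polynomial ℤ) *
          Polynomial.X ^ i
      = ∑ k ∈ Finset.range (n + 1), (-1 : Polynomial ℤ) ^ k *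
          ∑ i ∈ Finset.range (2 * n - 2 * k + 1),
            ((n.choose (k + (i + 1) / 2) * n.choose (i / 2) : ℕ) : Polynomial ℤ) *
              Polynomial.X ^ i) := by
  refine ⟨fun i hi _ => sum_range_neg_one_pow_mul_choose_add hn (by omega), ?_⟩
  symm
  calc _ = ∑ i ∈ range (2 * n + 1),
          (∑ k ∈ range (n - (i + 1) / 2 + 1),
            (-1 : Polynomial ℤ) ^ k * (n.choose (k + (i + 1) / 2) : Polynomial ℤ)) *
          ((n.choose (i / 2) : Polynomial ℤ) * Polynomial.X ^ i) := by
        simp_rw [mul_sum, sum_mul, sum_range_sum_range_two_mul_sub_comm n]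
        refine sum_congr rfl fun i _ => sum_congr rfl fun k _ => ?_
        push_cast
        ring
    _ = ∑ i ∈ Icc 1 (2 * n),
          (∑ k ∈ range (n - (i + 1) / 2 + 1),
            (-1 : Polynomial ℤ) ^ k * (n.choose (k + (i + 1) / 2) : Polynomial ℤ)) *
          ((n.choose (i / 2) : Polynomial ℤ) * Polynomial.X ^ i) := by
        rw [Nat.range_succ_eq_Icc_zero, ← insert_Icc_add_one_left_eq_Icc (Nat.zero_le _),
          sum_insert (by simp)]
        simp [sum_range_neg_one_pow_mul_choose (R := Polynomial ℤ) (by omega : n ≠ 0)]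
    _ = _ := sum_congr rfl fun i hi => by
        rw [sum_range_neg_one_pow_mul_choose_add hn (by simp at hi; omega)]
        push_cast
        ring
end
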